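/- Let (φ'_N, H̄'_N) and (φ''_N, H̄''_N) be two solutions of the discrete weak KAM equation 𝓗_N(x, (−Δ_N)φ_N(x)) = H̄_N on Λ_N, where φ'_N, φ''_N are bounded. Then H̄'_N = H̄''_N, i.e. the effective Hamiltonian of the weak KAM equation on the lattice Λ_N is unique. -/

import Mathlib

open scoped BigOperators RealInnerProductSpace
open MeasureTheory Filter

noncomputable section

abbrev Evec (d : ℕ) := EuclideanSpace ℝ (Fin d)

def sgnz (a : ℝ) : ℤ := if 0 < a then 1 else if a < 0 then -1 else 0

def latE (d N : ℕ) (x : Fin d → ZMod N) : Evec d :=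
  (WithLp.equiv 2 (Fin d → ℝ)).symm fun i => ((x i).val : ℝ) / N

def dplus {d N : ℕ} (φ : (Fin d → ZMod N) → ℝ) (x : Fin d → ZMod N) (i : Fin d) : ℝ :=
  (N : ℝ) * (φ (x + Pi.single i 1) - φ x)

def dminus {d N : ℕ} (φ : (Fin d → ZMod N) → ℝ) (x : Fin d → ZMod N) (i : Fin d) : ℝ :=
  (N : ℝ) * (φ (x - Pi.single i 1) - φ x)

def DeltaN {d N : ℕ} (φ : (Fin d → ZMod N) → ℝ) (x : Fin d → ZMod N) : Fin d → ℝ × ℝ :=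
  fun i => (dplus φ x i, dminus φ x i)

def negDeltaN {d N : ℕ} (φ : (Fin d → ZMod N) → ℝ) (x : Fin d → ZMod N) : Fin d → ℝ × ℝ :=
  fun i => (-dplus φ x i, -dminus φ x i)

def pairL {d : ℕ} (ξ : Fin d → ℝ × ℝ) (v : Evec d) : ℝ :=
  ∑ i, ((ξ i).1 * max (v i) 0 + (ξ i).2 * max (-(v i)) 0)

def QN {d N : ℕ} (v : Evec d) (x y : Fin d → ZMod N) : ℝ :=
  (∑ i, if y = x + Pi.single i ((sgnz (v i) : ZMod N)) then (N : ℝ) * |v i| else 0)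
    - (if y = x then (N : ℝ) * ∑ i, |v i| else 0)

def HNlat {d N : ℕ} (L : Evec d → Evec d → ℝ) (x : Fin d → ZMod N)
    (ξ : Fin d → ℝ × ℝ) : ℝ :=
  ⨆ v : Evec d, (pairL ξ v - L (latE d N x) v)

/-!
Comparison at a maximum point of `φ' - φ''`: there every forward and backward difference of
`φ''` dominates the corresponding one of `φ'`, i.e. `-Δ_N φ'' ≤ -Δ_N φ'` componentwise. The
lattice Hamiltonian is monotone in its momentum pair (the pairing has nonnegative weights
`max (±vᵢ) 0`), so evaluating both equations at that point gives `H̄'' ≤ H̄'`, and symmetry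
gives equality. Superlinearity of `L` keeps the suprema defining `𝓗_N` finite.
-/

lemma pairL_le_mul_norm {d : ℕ} (ξ : Fin d → ℝ × ℝ) (v : Evec d) :
    pairL ξ v ≤ (∑ i, (|(ξ i).1| + |(ξ i).2|)) * ‖v‖ := by
  rw [pairL, Finset.sum_mul]
  refine Finset.sum_le_sum fun i _ => ?_
  have hvi : |v i| ≤ ‖v‖ := by simpa using PiLp.norm_apply_le v i
  have hpos : max (v i) 0 ≤ ‖v‖ := max_le ((le_abs_self _).trans hvi) (norm_nonneg v)
  have hneg : max (-v i) 0 ≤ ‖v‖ := max_le ((neg_le_abs _).trans hvi) (norm_nonneg v)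
  calc (ξ i).1 * max (v i) 0 + (ξ i).2 * max (-v i) 0
      ≤ |(ξ i).1| * max (v i) 0 + |(ξ i).2| * max (-v i) 0 := by
        gcongr <;> exact le_abs_self _
    _ ≤ |(ξ i).1| * ‖v‖ + |(ξ i).2| * ‖v‖ := by gcongr
    _ = (|(ξ i).1| + |(ξ i).2|) * ‖v‖ := by ring

lemma bddAbove_range_pairL_sub {d : ℕ} (ℓ : Evec d → ℝ) (g : ℝ → ℝ)
    (hsl : ∀ a : ℝ, 0 ≤ a → ∀ v : Evec d, a * ‖v‖ + g a ≤ ℓ v) (ξ : Fin d → ℝ × ℝ) :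
    BddAbove (Set.range fun v : Evec d => pairL ξ v - ℓ v) := by
  set a := max (∑ i, (|(ξ i).1| + |(ξ i).2|)) 0
  refine ⟨-g a, ?_⟩
  rintro _ ⟨v, rfl⟩
  have hpair : pairL ξ v ≤ a * ‖v‖ :=
    (pairL_le_mul_norm ξ v).trans (by gcongr; exact le_max_left _ _)
  linarith [hsl a (le_max_right _ _) v]

lemma pairL_mono {d : ℕ} {ξ ξ' : Fin d → ℝ × ℝ} (h : ξ ≤ ξ') (v : Evec d) :
    pairL ξ v ≤ pairL ξ' v :=
  Finset.sum_le_sum fun i _ => by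
    gcongr
    exacts [(h i).1, (h i).2]

lemma HNlat_mono {d N : ℕ} (L : Evec d → Evec d → ℝ) (g : ℝ → ℝ)
    (hsl : ∀ a : ℝ, 0 ≤ a → ∀ (x v : Evec d), a * ‖v‖ + g a ≤ L x v)
    (x : Fin d → ZMod N) {ξ ξ' : Fin d → ℝ × ℝ} (h : ξ ≤ ξ') :
    HNlat L x ξ ≤ HNlat L x ξ' :=
  ciSup_mono (bddAbove_range_pairL_sub _ g (fun a ha => hsl a ha _) ξ')
    fun v => sub_le_sub_right (pairL_mono h v) _

lemma negDeltaN_le_of_forall_sub_le {d N : ℕ} {φ' φ'' : (Fin d → ZMod N) → ℝ}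
    {x₀ : Fin d → ZMod N} (hmax : ∀ y, φ' y - φ'' y ≤ φ' x₀ - φ'' x₀) :
    negDeltaN φ'' x₀ ≤ negDeltaN φ' x₀ := by
  have hle : ∀ y, φ' y - φ' x₀ ≤ φ'' y - φ'' x₀ := fun y => by linarith [hmax y]
  intro i
  constructor
  · simp only [negDeltaN, dplus, neg_le_neg_iff]
    exact mul_le_mul_of_nonneg_left (hle _) N.cast_nonneg
  · simp only [negDeltaN, dminus, neg_le_neg_iff]
    exact mul_le_mul_of_nonneg_left (hle _) N.cast_nonneg

lemma HNlat_const_le {d N : ℕ} [NeZero N] (L : Evec d → Evec d → ℝ) (g : ℝ → ℝ)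
    (hsl : ∀ a : ℝ, 0 ≤ a → ∀ (x v : Evec d), a * ‖v‖ + g a ≤ L x v)
    {φ' φ'' : (Fin d → ZMod N) → ℝ} {H' H'' : ℝ}
    (h1 : ∀ x, HNlat L x (negDeltaN φ' x) = H')
    (h2 : ∀ x, HNlat L x (negDeltaN φ'' x) = H'') : H'' ≤ H' := by
  obtain ⟨x₀, hmax⟩ := Finite.exists_max fun x => φ' x - φ'' x
  calc H'' = HNlat L x₀ (negDeltaN φ'' x₀) := (h2 x₀).symm
    _ ≤ HNlat L x₀ (negDeltaN φ' x₀) :=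
      HNlat_mono L g hsl x₀ (negDeltaN_le_of_forall_sub_le hmax)
    _ = H' := h1 x₀

theorem stmt11_general (d N : ℕ) [NeZero N] (L : Evec d → Evec d → ℝ) (g : ℝ → ℝ)
    (hsl : ∀ a : ℝ, 0 ≤ a → ∀ (x v : Evec d), a * ‖v‖ + g a ≤ L x v)
    (φ' φ'' : (Fin d → ZMod N) → ℝ) (H' H'' : ℝ)
    (h1 : ∀ x, HNlat L x (negDeltaN φ' x) = H')
    (h2 : ∀ x, HNlat L x (negDeltaN φ'' x) = H'') :
    H' = H'' :=
  le_antisymm (HNlat_const_le L g hsl h2 h1) (HNlat_const_le L g hsl h1 h2)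

/-- uniqueness of the effective Hamiltonian of the discrete weak KAM
equation on `Λ_N`: if `(φ', H̄')` and `(φ'', H̄'')` are two (bounded) solutions of
`𝓗_N(x, (−Δ_N)φ(x)) = H̄` on `Λ_N`, then `H̄' = H̄''`. -/
theorem stmt11 (d N : ℕ) [NeZero N] (L : Evec d → Evec d → ℝ) (g : ℝ → ℝ)
    (hLc : Continuous (Function.uncurry L))
    (hconv : ∀ x : Evec d, ConvexOn ℝ Set.univ (L x))
    (hsl : ∀ a : ℝ, 0 ≤ a → ∀ (x v : Evec d), a * ‖v‖ + g a ≤ L x v)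
    (φ' φ'' : (Fin d → ZMod N) → ℝ) (H' H'' : ℝ)
    (hb' : ∃ M, ∀ x, |φ' x| ≤ M) (hb'' : ∃ M, ∀ x, |φ'' x| ≤ M)
    (h1 : ∀ x, HNlat L x (negDeltaN φ' x) = H')
    (h2 : ∀ x, HNlat L x (negDeltaN φ'' x) = H'') :
    H' = H'' :=
  stmt11_general d N L g hsl φ' φ'' H' H'' h1 h2
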